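/- If f, g : {0,1}^n → {0,1}, S ⊆ {1,…,n}, F_S(x) = f(x) ∧ (g(x) ⊕ ⊕_{i∈S} x_i), and φ(x) = f(x)g(x) - (1/2)f(x), then for all S, T ⊆ {1,…,n}: |F̂_S(T) - (1/2)f̂(T)| = |φ̂(S ⊕ T)|, where S ⊕ T is the symmetric difference. -/

import Mathlib

/-!
Writing `χ_S(x) = (-1)^{|S ∩ x|}` for the character of `S`, a check on the eight values of
`(f x, g x, χ_S x)` gives `F_S = f / 2 + χ_S φ` pointwise. Fourier coefficients are linear and
`χ_S χ_T = χ_{S ∆ T}`, so `F̂_S(T) - f̂(T) / 2 = φ̂(S ∆ T)`, even before taking absolute values.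
-/

/-- Fourier coefficient of `h : {0,1}^n → ℝ` at `T`. -/
noncomputable def bFourier {n : ℕ} (h : (Fin n → Bool) → ℝ) (T : Finset (Fin n)) : ℝ :=
  (∑ x : Fin n → Bool, h x * (-1 : ℝ) ^ (T.filter fun i => x i).card) / 2 ^ n

/-- `{0,1}`-valued function as a real function. -/
def b2r {n : ℕ} (h : (Fin n → Bool) → Bool) : (Fin n → Bool) → ℝ :=
  fun x => if h x then 1 else 0

lemma Nat.neg_one_pow_eq_ite_bodd {R : Type*} [Monoid R] [HasDistribNeg R] (m : ℕ) :
    (-1 : R) ^ m = if m.bodd then -1 else 1 := by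
  simp only [neg_one_pow_eq_ite, Nat.even_iff, Nat.mod_two_of_bodd]
  cases m.bodd <;> simp

open scoped symmDiff

namespace Finset

variable {ι : Type*} [DecidableEq ι]

lemma card_symmDiff_add_two_mul_card_inter (s t : Finset ι) :
    #(s ∆ t) + 2 * #(s ∩ t) = #s + #t := by
  have h : #(s ∆ t) = #(s ∪ t) - #(s ∩ t) := by
    rw [symmDiff_eq_sup_sdiff_inf, sup_eq_union, inf_eq_inter,
      card_sdiff_of_subset inter_subset_union]
  have := card_union_add_card_inter s t
  have := card_le_card (inter_subset_union (s := s) (t := t))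
  omega

lemma neg_one_pow_card_symmDiff {R : Type*} [Monoid R] [HasDistribNeg R] (s t : Finset ι) :
    (-1 : R) ^ #(s ∆ t) = (-1) ^ #s * (-1) ^ #t := by
  rw [← pow_add, ← card_symmDiff_add_two_mul_card_inter, pow_add, pow_mul]
  simp

lemma filter_symmDiff (p : ι → Prop) [DecidablePred p] (s t : Finset ι) :
    (s ∆ t).filter p = s.filter p ∆ t.filter p := by
  ext i
  simp only [mem_symmDiff, mem_filter]
  tauto

end Finset

open Finset

section Fourier

variable {n : ℕ}

def walsh (S : Finset (Fin n)) (x : Fin n → Bool) : ℝ :=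
  (-1) ^ (S.filter fun i => x i).card

lemma walsh_symmDiff (S T : Finset (Fin n)) (x : Fin n → Bool) :
    walsh (S ∆ T) x = walsh S x * walsh T x := by
  rw [walsh, filter_symmDiff, neg_one_pow_card_symmDiff, walsh, walsh]

lemma bFourier_add (h k : (Fin n → Bool) → ℝ) (T : Finset (Fin n)) :
    bFourier (fun x => h x + k x) T = bFourier h T + bFourier k T := by
  simp only [bFourier, add_mul, sum_add_distrib, add_div]

lemma bFourier_const_mul (c : ℝ) (h : (Fin n → Bool) → ℝ) (T : Finset (Fin n)) :
    bFourier (fun x => c * h x) T = c * bFourier h T := by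
  simp only [bFourier, mul_assoc, ← mul_sum, mul_div_assoc]

lemma bFourier_walsh_mul (S T : Finset (Fin n)) (h : (Fin n → Bool) → ℝ) :
    bFourier (fun x => walsh S x * h x) T = bFourier h (S ∆ T) := by
  unfold bFourier
  congr 1
  refine sum_congr rfl fun x _ => ?_
  rw [← walsh, ← walsh, walsh_symmDiff]
  ring

end Fourier

lemma ite_and_bne_eq (a b c : Bool) :
    (if (a && (b != c)) then 1 else 0 : ℝ) =
      1 / 2 * (if a then 1 else 0) + (if c then -1 else 1) *
        ((if a then 1 else 0) * (if b then 1 else 0) - 1 / 2 * (if a then 1 else 0)) := by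
  cases a <;> cases b <;> cases c <;> norm_num

theorem stmt7 {n : ℕ} (f g : (Fin n → Bool) → Bool) (S T : Finset (Fin n)) :
    |bFourier (b2r fun x => f x && (g x != (S.filter fun i => x i).card.bodd)) T
        - (1 / 2) * bFourier (b2r f) T| =
      |bFourier (fun x => b2r f x * b2r g x - (1 / 2) * b2r f x) (symmDiff S T)| := by
  set φ : (Fin n → Bool) → ℝ := fun x => b2r f x * b2r g x - (1 / 2) * b2r f x
  have pointwise : (b2r fun x => f x && (g x != (S.filter fun i => x i).card.bodd)) =
      fun x => 1 / 2 * b2r f x + walsh S x * φ x := by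
    funext x
    rw [walsh, Nat.neg_one_pow_eq_ite_bodd]
    exact ite_and_bne_eq (f x) (g x) _
  rw [pointwise, bFourier_add, bFourier_const_mul, bFourier_walsh_mul, add_sub_cancel_left]
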